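/- arXiv:2311.12494 — 4 statements merged into one kernel-verified Lean document; each statement's English description precedes it below -/
import Mathlib

section
/- Let d ≥ 0 and h : [0,d] → [0,1] be differentiable and convex, not identically 1, and let p : [0,d] → [0,1) be twice differentiable with p'' < 0 on (0,d) and p < 1. Then the function q(c) = (1 − h(c))/(1 − p(c)) is single-peaked on [0,d]: i.e., the derivative of the numerator expression N(c) = p'(c)(1 − h(c)) − h'(c)(1 − p(c)) is strictly negative on (0,d), so N is strictly decreasing, and q is increasing where N > 0 and decreasing where N < 0. -/
open Set

/-!
`q' = N / (1 - p)²`, so `q` rises where `N > 0` and falls where `N < 0`. Differentiating `N`,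
the terms `± p' h'` cancel and `N' = p'' (1 - h) - h'' (1 - p)`. Concavity of `p` makes the first
term negative and convexity of `h` makes `h'' ≥ 0`; the factors `1 - p` and `1 - h` are positive
on `(0, d)`, the latter because a convex function bounded by `1` on an interval and `< 1`
somewhere stays `< 1` at every interior point.
-/

section OpenSegment

variable {𝕜 E β : Type*} [Semiring 𝕜] [PartialOrder 𝕜] [AddCommMonoid E] [Module 𝕜 E]
  [AddCommMonoid β] [PartialOrder β] [IsOrderedCancelAddMonoid β] [Module 𝕜 β]
  [PosSMulStrictMono 𝕜 β]

theorem ConvexOn.lt_of_mem_openSegment {s : Set E} {f : E → β} (hf : ConvexOn 𝕜 s f)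
    {x y z : E} {M : β} (hx : x ∈ s) (hy : y ∈ s) (hz : z ∈ openSegment 𝕜 x y)
    (hfx : f x ≤ M) (hfy : f y < M) : f z < M := by
  obtain ⟨a, b, ha, hb, hab, rfl⟩ := hz
  calc f (a • x + b • y) ≤ a • f x + b • f y := hf.2 hx hy ha.le hb.le hab
    _ < a • M + b • M :=
        add_lt_add_of_le_of_lt (smul_le_smul_of_nonneg_left hfx ha.le)
          (smul_lt_smul_of_pos_left hfy hb)
    _ = M := Convex.combo_self hab M

end OpenSegment

theorem ConvexOn.lt_of_mem_Ioo {f : ℝ → ℝ} {a b M x₀ c : ℝ} (hf : ConvexOn ℝ (Icc a b) f)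
    (hM : ∀ x ∈ Icc a b, f x ≤ M) (hx₀ : x₀ ∈ Icc a b) (hfx₀ : f x₀ < M) (hc : c ∈ Ioo a b) :
    f c < M := by
  have ha : a ∈ Icc a b := left_mem_Icc.2 (hc.1.trans hc.2).le
  have hb : b ∈ Icc a b := right_mem_Icc.2 (hc.1.trans hc.2).le
  rcases lt_trichotomy c x₀ with hlt | rfl | hgt
  · refine hf.lt_of_mem_openSegment ha hx₀ ?_ (hM a ha) hfx₀
    rw [openSegment_eq_Ioo (hc.1.trans hlt)]
    exact ⟨hc.1, hlt⟩
  · exact hfx₀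
  · refine hf.lt_of_mem_openSegment hb hx₀ ?_ (hM b hb) hfx₀
    rw [openSegment_symm, openSegment_eq_Ioo (hgt.trans hc.2)]
    exact ⟨hgt, hc.2⟩

theorem ConvexOn.deriv_deriv_nonneg {s : Set ℝ} {f : ℝ → ℝ} (hf : ConvexOn ℝ s f)
    (hfd : ∀ x ∈ s, DifferentiableAt ℝ f x) {x : ℝ} (hx : x ∈ interior s) :
    0 ≤ deriv (deriv f) x := by
  rw [← derivWithin_of_isOpen isOpen_interior hx]
  exact ((hf.monotoneOn_deriv hfd).mono interior_subset).derivWithin_nonneg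

section

variable {h p : ℝ → ℝ} {x : ℝ}

theorem hasDerivAt_one_sub_div_one_sub (hh : DifferentiableAt ℝ h x)
    (hp : DifferentiableAt ℝ p x) (hpx : p x ≠ 1) :
    HasDerivAt (fun t => (1 - h t) / (1 - p t))
      ((deriv p x * (1 - h x) - deriv h x * (1 - p x)) / (1 - p x) ^ 2) x :=
  ((hh.hasDerivAt.const_sub 1).div (hp.hasDerivAt.const_sub 1)
    (sub_ne_zero.2 hpx.symm)).congr_deriv (by ring)

theorem hasDerivAt_deriv_mul_one_sub_sub (hh : DifferentiableAt ℝ h x)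
    (hh' : DifferentiableAt ℝ (deriv h) x) (hp : DifferentiableAt ℝ p x)
    (hp' : DifferentiableAt ℝ (deriv p) x) :
    HasDerivAt (fun t => deriv p t * (1 - h t) - deriv h t * (1 - p t))
      (deriv (deriv p) x * (1 - h x) - deriv (deriv h) x * (1 - p x)) x :=
  ((hp'.hasDerivAt.mul (hh.hasDerivAt.const_sub 1)).sub
    (hh'.hasDerivAt.mul (hp.hasDerivAt.const_sub 1))).congr_deriv (by ring)

end

theorem stmt4_general (d : ℝ) (h p : ℝ → ℝ)
    (hhdiff : Differentiable ℝ h) (hhdiff2 : Differentiable ℝ (deriv h))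
    (hhconv : ConvexOn ℝ (Set.Icc 0 d) h)
    (hhrange : ∀ c ∈ Set.Icc (0:ℝ) d, 0 ≤ h c ∧ h c ≤ 1)
    (hne : ∃ c ∈ Set.Icc (0:ℝ) d, h c ≠ 1)
    (hpdiff : Differentiable ℝ p) (hpdiff2 : Differentiable ℝ (deriv p))
    (hpconc : ∀ c ∈ Set.Ioo (0:ℝ) d, deriv (deriv p) c < 0)
    (hprange : ∀ c ∈ Set.Icc (0:ℝ) d, 0 ≤ p c ∧ p c < 1) :
    (∀ c ∈ Set.Ioo (0:ℝ) d,
      deriv (fun t => deriv p t * (1 - h t) - deriv h t * (1 - p t)) c < 0) ∧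
    StrictAntiOn (fun t => deriv p t * (1 - h t) - deriv h t * (1 - p t))
      (Set.Ioo (0:ℝ) d) ∧
    (∀ c ∈ Set.Ioo (0:ℝ) d,
      (0 < deriv p c * (1 - h c) - deriv h c * (1 - p c) →
        0 < deriv (fun t => (1 - h t) / (1 - p t)) c) ∧
      (deriv p c * (1 - h c) - deriv h c * (1 - p c) < 0 →
        deriv (fun t => (1 - h t) / (1 - p t)) c < 0)) := by
  have hN := fun c =>
    hasDerivAt_deriv_mul_one_sub_sub (hhdiff c) (hhdiff2 c) (hpdiff c) (hpdiff2 c)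
  have hp_lt_one : ∀ c ∈ Ioo 0 d, p c < 1 := fun c hc => (hprange c (Ioo_subset_Icc_self hc)).2
  have hh_lt_one : ∀ c ∈ Ioo 0 d, h c < 1 := by
    obtain ⟨c₀, hc₀, hhc₀⟩ := hne
    exact fun c hc => hhconv.lt_of_mem_Ioo (fun x hx => (hhrange x hx).2) hc₀
      ((hhrange c₀ hc₀).2.lt_of_ne hhc₀) hc
  have hN_deriv_neg : ∀ c ∈ Ioo 0 d,
      deriv (fun t => deriv p t * (1 - h t) - deriv h t * (1 - p t)) c < 0 := by
    intro c hc
    have hh'' := hhconv.deriv_deriv_nonneg (fun x _ => hhdiff x) (by rwa [interior_Icc])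
    rw [(hN c).deriv, sub_neg]
    exact (mul_neg_of_neg_of_pos (hpconc c hc) (sub_pos.2 (hh_lt_one c hc))).trans_le
      (mul_nonneg hh'' (sub_pos.2 (hp_lt_one c hc)).le)
  refine ⟨hN_deriv_neg, strictAntiOn_of_deriv_neg (convex_Ioo 0 d)
    (fun c _ => (hN c).continuousAt.continuousWithinAt) (by rwa [interior_Ioo]), fun c hc => ?_⟩
  have hsq : 0 < (1 - p c) ^ 2 := pow_pos (sub_pos.2 (hp_lt_one c hc)) 2
  rw [(hasDerivAt_one_sub_div_one_sub (hhdiff c) (hpdiff c) (hp_lt_one c hc).ne).deriv]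
  exact ⟨fun hpos => div_pos hpos hsq, fun hneg => div_neg_of_neg_of_pos hneg hsq⟩

/-- Single-peakedness of q(c) = (1-h(c))/(1-p(c)): the derivative of
N(c) = p'(c)(1-h(c)) - h'(c)(1-p(c)) is strictly negative on (0,d), so N is
strictly decreasing, and q is increasing where N > 0 and decreasing where N < 0. -/
theorem stmt4 (d : ℝ) (hd : 0 ≤ d) (h p : ℝ → ℝ)
    (hhdiff : Differentiable ℝ h) (hhdiff2 : Differentiable ℝ (deriv h))
    (hhconv : ConvexOn ℝ (Set.Icc 0 d) h)
    (hhrange : ∀ c ∈ Set.Icc (0:ℝ) d, 0 ≤ h c ∧ h c ≤ 1)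
    (hne : ∃ c ∈ Set.Icc (0:ℝ) d, h c ≠ 1)
    (hpdiff : Differentiable ℝ p) (hpdiff2 : Differentiable ℝ (deriv p))
    (hpconc : ∀ c ∈ Set.Ioo (0:ℝ) d, deriv (deriv p) c < 0)
    (hprange : ∀ c ∈ Set.Icc (0:ℝ) d, 0 ≤ p c ∧ p c < 1) :
    (∀ c ∈ Set.Ioo (0:ℝ) d,
      deriv (fun t => deriv p t * (1 - h t) - deriv h t * (1 - p t)) c < 0) ∧
    StrictAntiOn (fun t => deriv p t * (1 - h t) - deriv h t * (1 - p t))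
      (Set.Ioo (0:ℝ) d) ∧
    (∀ c ∈ Set.Ioo (0:ℝ) d,
      (0 < deriv p c * (1 - h c) - deriv h c * (1 - p c) →
        0 < deriv (fun t => (1 - h t) / (1 - p t)) c) ∧
      (deriv p c * (1 - h c) - deriv h c * (1 - p c) < 0 →
        deriv (fun t => (1 - h t) / (1 - p t)) c < 0)) :=
  stmt4_general d h p hhdiff hhdiff2 hhconv hhrange hne hpdiff hpdiff2 hpconc hprange
end

section
/- For a profile x supported in equilibrium by a balanced rule f (meaning each agent i's investment x_i maximizes her expected payoff U_i), the aggregate identity 𝕍(x) = f(0,0) + Σ_{j≥1} (∏_{i<j} p(x_i)) f(j,j) + 𝔾(x) holds; in particular, since f(0,0)=1 and f(j,j) ≥ 0, every equilibrium profile satisfies 𝕍(x) − 1 ≥ 𝔾(x). -/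
/-!
Write `P j = ∏_{i<j} p(x_i)` for the probability that agent `j` is reached. The chain stops at
`k` with probability `P k (1 - p(x_k))`, and agent `i < k` then receives `f(i,k)`. Summing these
expected shares over all pairs `i < k` in two ways gives the identity. For fixed `i` the sum
over `k` is `P (i+1) R_i`, which the first-order condition turns into
`P i g(x_i) + P i p(x_i) f(i,i)`. For fixed `k` balancedness makes the sum over `i` equal to
`P k (1 - p(x_k)) (k + 1 - f(k,k))`, and `∑ P k (1 - p(x_k)) (k+1) = ∑ P k` by Abel summation.
Since `p ≤ 1 - ε`, every series involved is dominated by `∑ (k+1) (1-ε)^k`, which justifies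
exchanging the order of summation and shows that `∑ P j g(x_j)` converges.
-/

open Finset

namespace BalancedRule

def reach (q : ℕ → ℝ) (j : ℕ) : ℝ := ∏ i ∈ range j, q i

def IsBalanced (f : ℕ → ℕ → ℝ) : Prop := ∀ k : ℕ, ∑ i ∈ range (k + 1), f i k = (k : ℝ) + 1

noncomputable def continuationPayoff (q : ℕ → ℝ) (f : ℕ → ℕ → ℝ) (i : ℕ) : ℝ :=
  ∑' m : ℕ, (∏ j ∈ Ico (i + 1) (i + 1 + m), q j) * (1 - q (i + 1 + m)) * f i (i + 1 + m)

/-- What agent `i` expects to collect from the chain stopping at agent `k`, an event of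
probability `reach q k * (1 - q k)`. -/
def expectedShare (q : ℕ → ℝ) (f : ℕ → ℕ → ℝ) (k i : ℕ) : ℝ :=
  if i < k then reach q k * (1 - q k) * f i k else 0

variable {q : ℕ → ℝ} {f : ℕ → ℕ → ℝ}

theorem reach_succ (j : ℕ) : reach q (j + 1) = reach q j * q j := prod_range_succ _ _

theorem reach_mul_prod_Ico (i m : ℕ) :
    reach q i * ∏ j ∈ Ico i (i + m), q j = reach q (i + m) :=
  prod_range_mul_prod_Ico _ (Nat.le_add_right i m)

theorem reach_nonneg (hq : ∀ i, 0 ≤ q i) (j : ℕ) : 0 ≤ reach q j :=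
  prod_nonneg fun i _ => hq i

theorem reach_le_pow {r : ℝ} (hq : ∀ i, 0 ≤ q i) (hqr : ∀ i, q i ≤ r) (j : ℕ) :
    reach q j ≤ r ^ j := by
  simpa [reach] using prod_le_prod (fun i _ => hq i) (fun i _ => hqr i) (s := range j)

theorem summable_succ_mul_reach {r : ℝ} (hq : ∀ i, 0 ≤ q i) (hqr : ∀ i, q i ≤ r) (hr : r < 1) :
    Summable fun k : ℕ => ((k : ℝ) + 1) * reach q k := by
  have hr0 : 0 ≤ r := (hq 0).trans (hqr 0)
  have hgeom : Summable fun k : ℕ => ((k : ℝ) + 1) * r ^ k := by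
    have hnorm : ‖r‖ < 1 := by rwa [Real.norm_eq_abs, abs_of_nonneg hr0]
    simpa [add_mul] using
      (summable_pow_mul_geometric_of_norm_lt_one 1 hnorm).add (summable_geometric_of_lt_one hr0 hr)
  refine hgeom.of_nonneg_of_le (fun k => by positivity [reach_nonneg hq k]) fun k => ?_
  exact mul_le_mul_of_nonneg_left (reach_le_pow hq hqr k) (by positivity)

theorem hasSum_sub_succ_mul_succ {P : ℕ → ℝ} (hP : Summable P)
    (hw : Summable fun k : ℕ => (k : ℝ) * P k) :
    HasSum (fun k : ℕ => (P k - P (k + 1)) * ((k : ℝ) + 1)) (∑' k, P k) := by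
  have hw' : Summable fun k : ℕ => ((k + 1 : ℕ) : ℝ) * P (k + 1) := (summable_nat_add_iff 1).2 hw
  refine (((hw.add hP).sub hw').congr fun k => by push_cast; ring).hasSum_iff.2 ?_
  calc ∑' k : ℕ, (P k - P (k + 1)) * ((k : ℝ) + 1)
      = ∑' k : ℕ, ((k : ℝ) * P k + P k) - ∑' k : ℕ, ((k + 1 : ℕ) : ℝ) * P (k + 1) := by
        rw [← (hw.add hP).tsum_sub hw']
        exact tsum_congr fun k => by push_cast; ring
    _ = ∑' k, P k := by
        rw [hw.tsum_add hP, hw.tsum_eq_zero_add]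
        simp

theorem IsBalanced.apply_zero_zero (hbal : IsBalanced f) : f 0 0 = 1 := by
  simpa using hbal 0

theorem IsBalanced.le_succ (hbal : IsBalanced f) (hf : ∀ i k, 0 ≤ f i k) {i k : ℕ}
    (hik : i ≤ k) : f i k ≤ (k : ℝ) + 1 :=
  hbal k ▸ single_le_sum (fun j _ => hf j k) (mem_range.2 (Nat.lt_succ_of_le hik))

theorem IsBalanced.sum_range (hbal : IsBalanced f) (k : ℕ) :
    ∑ i ∈ range k, f i k = (k : ℝ) + 1 - f k k := by
  rw [← hbal k, sum_range_succ, add_sub_cancel_right]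

theorem summable_reach_mul_diag (hq : ∀ i, 0 ≤ q i) (hf : ∀ i k, 0 ≤ f i k)
    (hbal : IsBalanced f) (hP : Summable fun k : ℕ => ((k : ℝ) + 1) * reach q k) :
    Summable fun k => reach q k * f k k :=
  hP.of_nonneg_of_le (fun k => mul_nonneg (reach_nonneg hq k) (hf k k)) fun k => by
    nlinarith [reach_nonneg hq k, hbal.le_succ hf (le_refl k)]

theorem expectedShare_nonneg (hq : ∀ i, 0 ≤ q i ∧ q i ≤ 1) (hf : ∀ i k, 0 ≤ f i k) (k i : ℕ) :
    0 ≤ expectedShare q f k i := by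
  unfold expectedShare
  split_ifs
  · exact mul_nonneg (mul_nonneg (reach_nonneg (fun i => (hq i).1) k) (sub_nonneg.2 (hq k).2))
      (hf i k)
  · exact le_rfl

theorem tsum_expectedShare_left (hbal : IsBalanced f) (k : ℕ) :
    ∑' i, expectedShare q f k i = reach q k * (1 - q k) * ((k : ℝ) + 1 - f k k) := by
  rw [tsum_eq_sum (f := expectedShare q f k) (s := range k)
    fun i hi => if_neg (mt mem_range.2 hi), ← hbal.sum_range, mul_sum]
  exact sum_congr rfl fun i hi => if_pos (mem_range.1 hi)

theorem tsum_expectedShare_right (i : ℕ) :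
    ∑' k, expectedShare q f k i = reach q (i + 1) * continuationPayoff q f i := by
  have hsupp : Function.support (fun k => expectedShare q f k i) ⊆
      Set.range fun m => i + 1 + m := by
    intro k hk
    have hik : i < k := by
      by_contra h
      exact hk (if_neg h)
    exact ⟨k - (i + 1), show i + 1 + (k - (i + 1)) = k by omega⟩
  rw [← (add_right_injective (i + 1)).tsum_eq hsupp, continuationPayoff, ← tsum_mul_left]
  refine tsum_congr fun m => ?_
  rw [expectedShare, if_pos (by omega), ← reach_mul_prod_Ico]
  ring

theorem summable_expectedShare (hq : ∀ i, 0 ≤ q i ∧ q i ≤ 1) (hf : ∀ i k, 0 ≤ f i k)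
    (hbal : IsBalanced f) (hP : Summable fun k : ℕ => ((k : ℝ) + 1) * reach q k) :
    Summable (Function.uncurry (expectedShare q f)) := by
  refine (summable_prod_of_nonneg fun p => expectedShare_nonneg hq hf p.1 p.2).2
    ⟨fun k => summable_of_ne_finset_zero (s := range k) fun i hi => if_neg (mt mem_range.2 hi),
      hP.of_nonneg_of_le (fun k => tsum_nonneg fun i => expectedShare_nonneg hq hf k i)
        fun k => ?_⟩
  rw [tsum_expectedShare_left hbal]
  have hreach := reach_nonneg (fun i => (hq i).1) k
  nlinarith [hf k k, hbal.le_succ hf (le_refl k), mul_nonneg (hq k).1 hreach, (hq k).2]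

theorem tsum_reach_eq_add {g : ℕ → ℝ} (hq : ∀ i, 0 < q i ∧ q i ≤ 1) (hf : ∀ i k, 0 ≤ f i k)
    (hbal : IsBalanced f) (hP : Summable fun k : ℕ => ((k : ℝ) + 1) * reach q k)
    (hFOC : ∀ i, continuationPayoff q f i - f i i = g i / q i) :
    ∑' j, reach q j = ∑' j, reach q j * f j j + ∑' j, reach q j * g j := by
  have hq' : ∀ i, 0 ≤ q i ∧ q i ≤ 1 := fun i => ⟨(hq i).1.le, (hq i).2⟩
  have hreach := reach_nonneg (fun i => (hq' i).1)
  have hS := summable_expectedShare hq' hf hbal hP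
  have hagent (i : ℕ) : ∑' k, expectedShare q f k i = reach q i * g i + reach q i * q i * f i i := by
    rw [tsum_expectedShare_right, reach_succ, eq_add_of_sub_eq (hFOC i), mul_add, mul_assoc,
      mul_div_cancel₀ _ (hq i).1.ne']
  have hPf := summable_reach_mul_diag (fun i => (hq' i).1) hf hbal hP
  have hPqf : Summable fun k => reach q k * q k * f k k :=
    hPf.of_nonneg_of_le (fun k => mul_nonneg (mul_nonneg (hreach k) (hq' k).1) (hf k k))
      fun k => by nlinarith [hreach k, hf k k, (hq' k).2, mul_nonneg (hreach k) (hf k k)]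
  have hPg : Summable fun k => reach q k * g k :=
    ((hS.prod_symm.prod.congr hagent).sub hPqf).congr fun k => add_sub_cancel_right _ _
  have hAbel := hasSum_sub_succ_mul_succ (P := reach q)
    (hP.of_nonneg_of_le hreach fun k => by nlinarith [hreach k])
    (hP.of_nonneg_of_le (fun k => by positivity [hreach k]) fun k => by nlinarith [hreach k])
  simp only [reach_succ, ← mul_one_sub] at hAbel
  have hstop : ∑' k, ∑' i, expectedShare q f k i =
      ∑' j, reach q j - (∑' j, reach q j * f j j - ∑' j, reach q j * q j * f j j) := by
    rw [tsum_congr (tsum_expectedShare_left hbal), ← hAbel.tsum_eq, ← hPf.tsum_sub hPqf,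
      ← hAbel.summable.tsum_sub (hPf.sub hPqf)]
    exact tsum_congr fun k => by ring
  have hswap := hS.tsum_comm
  rw [hstop, tsum_congr hagent, hPg.tsum_add hPqf] at hswap
  linarith

end BalancedRule

theorem stmt7_general (ε : ℝ) (hε : 0 < ε) (p g : ℝ → ℝ)
    (f : ℕ → ℕ → ℝ) (hfnn : ∀ i k, 0 ≤ f i k)
    (hbal : ∀ k : ℕ, ∑ i ∈ Finset.range (k + 1), f i k = (k : ℝ) + 1)
    (x : ℕ → ℝ)
    (hpx : ∀ i, 0 < p (x i) ∧ p (x i) ≤ 1 - ε)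
    (hFOC : ∀ i : ℕ,
      (∑' m : ℕ, (∏ j ∈ Finset.Ico (i + 1) (i + 1 + m), p (x j)) *
          (1 - p (x (i + 1 + m))) * f i (i + 1 + m)) - f i i
        = g (x i) / p (x i)) :
    (∑' j : ℕ, ∏ i ∈ Finset.range j, p (x i)) =
      (∑' j : ℕ, (∏ i ∈ Finset.range j, p (x i)) * f j j) +
      (∑' j : ℕ, (∏ i ∈ Finset.range j, p (x i)) * g (x j)) ∧
    (∑' j : ℕ, ∏ i ∈ Finset.range j, p (x i)) - 1 ≥
      ∑' j : ℕ, (∏ i ∈ Finset.range j, p (x i)) * g (x j) := by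
  have hbal' : BalancedRule.IsBalanced f := hbal
  have hq (i : ℕ) : 0 < p (x i) ∧ p (x i) ≤ 1 := ⟨(hpx i).1, (hpx i).2.trans (by linarith)⟩
  have hP := BalancedRule.summable_succ_mul_reach (q := fun i => p (x i))
    (fun i => (hq i).1.le) (fun i => (hpx i).2) (sub_lt_self 1 hε)
  have hV := BalancedRule.tsum_reach_eq_add (g := fun i => g (x i)) hq hfnn hbal' hP hFOC
  have hF := (BalancedRule.summable_reach_mul_diag (fun i => (hq i).1.le) hfnn hbal' hP).le_tsum 0
    fun j _ => mul_nonneg (BalancedRule.reach_nonneg (fun i => (hq i).1.le) j) (hfnn j j)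
  simp only [BalancedRule.reach, prod_range_zero, one_mul, hbal'.apply_zero_zero] at hV hF
  exact ⟨hV, by linarith⟩

/-- Aggregate equilibrium identity: if the balanced rule f supports profile x
(first-order conditions R_i − f(i,i) = g(x_i)/p(x_i) hold for all i), then
𝕍(x) = f(0,0) + Σ_{j≥1}(∏_{i<j}p(x_i)) f(j,j) + 𝔾(x), and hence 𝕍(x) − 1 ≥ 𝔾(x). -/
theorem stmt7 (ε : ℝ) (hε : 0 < ε) (p g : ℝ → ℝ)
    (f : ℕ → ℕ → ℝ) (hfnn : ∀ i k, 0 ≤ f i k)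
    (hbal : ∀ k : ℕ, ∑ i ∈ Finset.range (k + 1), f i k = (k : ℝ) + 1)
    (x : ℕ → ℝ) (hx : ∀ i, 0 ≤ x i)
    (hpx : ∀ i, 0 < p (x i) ∧ p (x i) ≤ 1 - ε)
    (hV : Summable (fun j : ℕ => ∏ i ∈ Finset.range j, p (x i)))
    (hG : Summable (fun j : ℕ => (∏ i ∈ Finset.range j, p (x i)) * g (x j)))
    (hF : Summable (fun j : ℕ => (∏ i ∈ Finset.range j, p (x i)) * f j j))
    (hFOC : ∀ i : ℕ,
      (∑' m : ℕ, (∏ j ∈ Finset.Ico (i + 1) (i + 1 + m), p (x j)) *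
          (1 - p (x (i + 1 + m))) * f i (i + 1 + m)) - f i i
        = g (x i) / p (x i)) :
    (∑' j : ℕ, ∏ i ∈ Finset.range j, p (x i)) =
      (∑' j : ℕ, (∏ i ∈ Finset.range j, p (x i)) * f j j) +
      (∑' j : ℕ, (∏ i ∈ Finset.range j, p (x i)) * g (x j)) ∧
    (∑' j : ℕ, ∏ i ∈ Finset.range j, p (x i)) - 1 ≥
      ∑' j : ℕ, (∏ i ∈ Finset.range j, p (x i)) * g (x j) :=
  stmt7_general ε hε p g f hfnn hbal x hpx hFOC
end

section
/- Suppose g(c) > c for all c > 0 (strict concavity consequence). If c ∈ (0,1) satisfies the first-best condition (1 − c)/(1 − p(c)) = g(c)/p(c) with p(c) < 1, then g(c) > p(c); hence the first-best constant profile violates the equilibrium condition p(c) ≥ g(c) and cannot be supported. -/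
/-- First-best investments cannot be supported: if g(c) > c for all c > 0 and
c ∈ (0,1) satisfies (1−c)/(1−p(c)) = g(c)/p(c) with 0 < p(c) < 1, then g(c) > p(c). -/
theorem stmt9 (p g : ℝ → ℝ)
    (hgc : ∀ c > (0:ℝ), c < g c)
    (c : ℝ) (hc : c ∈ Set.Ioo (0:ℝ) 1)
    (hp0 : 0 < p c) (hp1 : p c < 1)
    (hFB : (1 - c) / (1 - p c) = g c / p c) :
    p c < g c := by
  have hg := hgc c hc.1
  have h1 : (1 : ℝ) - p c > 0 := by linarith
  have key : (1 - c) * p c = g c * (1 - p c) := by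
    field_simp at hFB; linarith
  nlinarith [mul_pos hp0 (sub_pos.mpr hg)]
end

section
/- For a near-constant profile x = (x_0, c, c, …) with p(c) < 1, the expected welfare equals 𝕎(x) = 1 − x_0 + p(x_0)·(1 − c)/(1 − p(c)). -/
/-- Welfare of a near-constant profile (x₀, c, c, …) with p(c) < 1:
𝕎 = 1 − x₀ + p(x₀)(1−c)/(1−p(c)). -/
theorem stmt15 (p : ℝ → ℝ) (x0 c : ℝ) (h0 : 0 ≤ p c) (h1 : p c < 1)
    (hpx0 : 0 ≤ p x0)
    (x : ℕ → ℝ) (hx : x 0 = x0) (hxc : ∀ n ≥ 1, x n = c) :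
    (∑' j : ℕ, ∏ i ∈ Finset.range j, p (x i)) -
      (∑' j : ℕ, (∏ i ∈ Finset.range j, p (x i)) * x j) =
    1 - x0 + p x0 * (1 - c) / (1 - p c) := by
  set f : ℕ → ℝ := fun j => ∏ i ∈ Finset.range j, p (x i) with hf
  have hfs : ∀ n : ℕ, f (n + 1) = p x0 * p c ^ n := by
    intro n
    induction n with
    | zero => simp [hf, hx]
    | succ m ih =>
      have : f (m + 2) = f (m + 1) * p (x (m + 1)) := by
        simp [hf, Finset.prod_range_succ]
      rw [this, ih, hxc (m + 1) (by omega)]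
      ring
  have hgeo : Summable (fun n : ℕ => p c ^ n) := summable_geometric_of_lt_one h0 h1
  have hsumf1 : Summable (fun n : ℕ => f (n + 1)) := by
    simpa [hfs] using hgeo.mul_left (p x0)
  have hsumf : Summable f := (summable_nat_add_iff 1).mp hsumf1
  have hsumg1 : Summable (fun n : ℕ => f (n + 1) * x (n + 1)) := by
    apply Summable.congr (hgeo.mul_left (p x0 * c))
    intro n
    rw [hfs, hxc (n + 1) (by omega)]
    ring
  have hsumg : Summable (fun n => f n * x n) := (summable_nat_add_iff 1).mp hsumg1
  have htg : (∑' n : ℕ, p c ^ n) = (1 - p c)⁻¹ := tsum_geometric_of_lt_one h0 h1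
  have hS1 : (∑' j : ℕ, f j) = 1 + p x0 * (1 - p c)⁻¹ := by
    rw [Summable.tsum_eq_zero_add hsumf]
    have : (∑' n : ℕ, f (n + 1)) = p x0 * (1 - p c)⁻¹ := by
      rw [show (fun n : ℕ => f (n + 1)) = fun n : ℕ => p x0 * p c ^ n from funext hfs,
        tsum_mul_left, htg]
    rw [this]
    simp [hf]
  have hS2 : (∑' j : ℕ, f j * x j) = x0 + p x0 * c * (1 - p c)⁻¹ := by
    rw [Summable.tsum_eq_zero_add hsumg]
    have : (∑' n : ℕ, f (n + 1) * x (n + 1)) = p x0 * c * (1 - p c)⁻¹ := by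
      have heq : (fun n : ℕ => f (n + 1) * x (n + 1)) = fun n : ℕ => p x0 * c * p c ^ n := by
        funext n; rw [hfs, hxc (n + 1) (by omega)]; ring
      rw [heq, tsum_mul_left, htg]
    rw [this]
    simp [hf, hx]
  rw [hS1, hS2]
  have hne : 1 - p c ≠ 0 := by linarith
  field_simp
  ring
end
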